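/- Let k ≥ 1 be an integer, λ = 1/(2k), and let U_k be the implicit Burgers profile. Define u(x,t) := (1-t)^λ · U_k((1-t)^{-(1+λ)} x) for x ∈ ℝ, t < 1. Then u solves the inviscid Burgers equation ∂_t u + u ∂_x u = 0 on ℝ × (-∞,1), satisfies the uniform bound |u(x,t)| ≤ |x|^{1/(2k+1)} for all x ∈ ℝ and t < 1, and its spatial gradient at the origin equals ∂_x u(0,t) = -(1-t)^{-1}, which tends to -∞ as t → 1⁻. In particular, u is a solution that stays bounded on compact spatial sets but whose gradient blows up in finite time. -/

import Mathlib

/-!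
The profile `U` is the inverse of the strictly decreasing map `v ↦ -(v + v ^ (2k+1))`, so it
is differentiable with `U' = -1 / (1 + (2k+1) U ^ (2k))`, `U 0 = 0` and `|U y| ^ (2k+1) ≤ |y|`.
For any exponent `λ`, the ansatz `(1-t)^λ U((1-t)^{-(1+λ)} x)` solves Burgers as soon as `U`
solves the self-similar ODE `-λ U + ((1+λ) y + U) U' = 0`, and the implicit profile does so for
`λ = 1/(2k)`. The same scaling makes the bound `|x| ^ (1/(2k+1))` time-independent, and at the
origin `∂ₓu = (1-t)⁻¹ U'(0) = -(1-t)⁻¹`.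
-/

open Real Filter Topology

section ImplicitProfile

lemma strictMono_add_pow_two_mul_add_one (k : ℕ) :
    StrictMono fun v : ℝ => v + v ^ (2 * k + 1) :=
  strictMono_id.add (Odd.strictMono_pow ⟨k, rfl⟩)

lemma surjective_add_pow_two_mul_add_one (k : ℕ) :
    Function.Surjective fun v : ℝ => v + v ^ (2 * k + 1) := by
  refine Continuous.surjective (by fun_prop) (tendsto_atTop_mono' atTop ?_ tendsto_id)
    (tendsto_atBot_mono' atBot ?_ tendsto_id)
  · filter_upwards [eventually_ge_atTop 0] with v hv
    simpa using pow_nonneg hv (2 * k + 1)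
  · filter_upwards [eventually_le_atBot 0] with v hv
    simpa using Odd.pow_nonpos ⟨k, rfl⟩ hv

variable {k : ℕ} {U : ℝ → ℝ} (hU : ∀ y, U y + U y ^ (2 * k + 1) = -y)
include hU

lemma map_zero_of_add_pow_eq_neg : U 0 = 0 :=
  (strictMono_add_pow_two_mul_add_one k).injective <| by simp [hU 0]

lemma continuous_of_add_pow_eq_neg : Continuous U := by
  have hmono : Monotone fun y => U (-y) := fun y y' hyy' =>
    (strictMono_add_pow_two_mul_add_one k).le_iff_le.mp (by simpa [hU] using hyy')
  have hsurj : Function.Surjective fun y => U (-y) := fun v =>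
    ⟨v + v ^ (2 * k + 1), (strictMono_add_pow_two_mul_add_one k).injective (by simp [hU])⟩
  simpa [Function.comp_def] using (hmono.continuous_of_surjective hsurj).comp continuous_neg

lemma hasDerivAt_of_add_pow_eq_neg (y : ℝ) :
    HasDerivAt U (-(1 + (2 * k + 1) * U y ^ (2 * k)))⁻¹ y := by
  have hf : HasDerivAt (fun v : ℝ => -(v + v ^ (2 * k + 1)))
      (-(1 + (2 * k + 1) * U y ^ (2 * k))) (U y) := by
    have := ((hasDerivAt_id' (U y)).fun_add (hasDerivAt_pow (2 * k + 1) (U y))).fun_neg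
    push_cast [Nat.add_sub_cancel] at this
    exact this
  have hpos : 0 < 1 + (2 * k + 1) * U y ^ (2 * k) := by
    have := Even.pow_nonneg ⟨k, two_mul k⟩ (U y); positivity
  exact hf.of_local_left_inverse (continuous_of_add_pow_eq_neg hU).continuousAt
    (neg_ne_zero.mpr hpos.ne') (.of_forall fun z => by simp [hU z])

lemma abs_le_rpow_of_add_pow_eq_neg (y : ℝ) : |U y| ≤ |y| ^ (1 / (2 * k + 1) : ℝ) := by
  have hpow : |U y| ^ (2 * k + 1) ≤ |y| := by
    have hy : y = -(U y + U y ^ (2 * k + 1)) := by linarith [hU y]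
    generalize U y = v at hy ⊢
    subst hy
    have hsign : |v + v ^ (2 * k + 1)| = |v| + |v ^ (2 * k + 1)| := by
      refine (abs_add_eq_add_abs_iff _ _).mpr ((le_total 0 v).imp (fun h => ⟨h, pow_nonneg h _⟩)
        (fun h => ⟨h, Odd.pow_nonpos ⟨k, rfl⟩ h⟩))
    rw [abs_neg, hsign, abs_pow]
    linarith [abs_nonneg v]
  calc |U y| = (|U y| ^ (2 * k + 1)) ^ (1 / (2 * k + 1) : ℝ) := by
        rw [← rpow_natCast, ← rpow_mul (abs_nonneg _)]; push_cast
        rw [mul_one_div_cancel (by positivity), rpow_one]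
    _ ≤ |y| ^ (1 / (2 * k + 1) : ℝ) := by gcongr

lemma selfSimilar_ode_of_add_pow_eq_neg (hk : k ≠ 0) (y : ℝ) :
    -(1 / (2 * k)) * U y + ((1 + 1 / (2 * k)) * y + U y) *
      (-(1 + (2 * k + 1) * U y ^ (2 * k)))⁻¹ = 0 := by
  have hpos : 0 < 1 + (2 * k + 1) * U y ^ (2 * k) := by
    have := Even.pow_nonneg ⟨k, two_mul k⟩ (U y); positivity
  have hk' : (k : ℝ) ≠ 0 := by exact_mod_cast hk
  have hy : y = -(U y + U y ^ (2 * k + 1)) := by linarith [hU y]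
  generalize U y = v at hy hpos ⊢
  subst hy
  -- with `λ = 1/(2k)`, `λ + (1+λ) v^(2k) = λ (1 + (2k+1) v^(2k))` cancels the denominator
  rw [pow_succ]
  field_simp
  ring

end ImplicitProfile

noncomputable def selfSimilar (lam : ℝ) (U : ℝ → ℝ) (x t : ℝ) : ℝ :=
  (1 - t) ^ lam * U ((1 - t) ^ (-(1 + lam)) * x)

section SelfSimilar

variable {lam : ℝ} {U : ℝ → ℝ} {x t : ℝ}

lemma hasDerivAt_selfSimilar_space {U' : ℝ} (hU : HasDerivAt U U' ((1 - t) ^ (-(1 + lam)) * x))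
    (ht : t < 1) : HasDerivAt (fun z => selfSimilar lam U z t) ((1 - t)⁻¹ * U') x := by
  have hS : 0 < 1 - t := by linarith
  refine ((hU.comp x ((hasDerivAt_id x).const_mul _)).const_mul ((1 - t) ^ lam)).congr_deriv ?_
  rw [mul_one, mul_comm U', ← mul_assoc, ← rpow_add hS, ← rpow_neg_one]
  ring_nf

lemma hasDerivAt_selfSimilar_time {U' : ℝ} (hU : HasDerivAt U U' ((1 - t) ^ (-(1 + lam)) * x))
    (ht : t < 1) :
    HasDerivAt (fun s => selfSimilar lam U x s)
      ((1 - t) ^ (lam - 1) * (-lam * U ((1 - t) ^ (-(1 + lam)) * x) +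
        (1 + lam) * ((1 - t) ^ (-(1 + lam)) * x) * U')) t := by
  have hS : 0 < 1 - t := by linarith
  have hbase : HasDerivAt (fun s : ℝ => 1 - s) (-1) t := by
    simpa using (hasDerivAt_id t).const_sub 1
  have hscale := (hbase.rpow_const (p := -(1 + lam)) (Or.inl hS.ne')).mul_const x
  refine ((hbase.rpow_const (p := lam) (Or.inl hS.ne')).mul (hU.comp t hscale)).congr_deriv ?_
  have hpow : (1 - t) ^ lam * (1 - t) ^ (-(1 + lam) - 1) =
      (1 - t) ^ (lam - 1) * (1 - t) ^ (-(1 + lam)) := by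
    rw [← rpow_add hS, ← rpow_add hS]; ring_nf
  rw [Function.comp_apply]
  linear_combination ((1 + lam) * U' * x) * hpow

lemma selfSimilar_burgers {U' : ℝ → ℝ} (hU : ∀ y, HasDerivAt U (U' y) y)
    (hode : ∀ y, -lam * U y + ((1 + lam) * y + U y) * U' y = 0) (ht : t < 1) :
    deriv (fun s => selfSimilar lam U x s) t +
      selfSimilar lam U x t * deriv (fun z => selfSimilar lam U z t) x = 0 := by
  set y := (1 - t) ^ (-(1 + lam)) * x
  have hS : 0 < 1 - t := by linarith
  rw [(hasDerivAt_selfSimilar_time (hU y) ht).deriv,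
    (hasDerivAt_selfSimilar_space (hU y) ht).deriv, selfSimilar]
  have hpow : (1 - t) ^ lam * (1 - t)⁻¹ = (1 - t) ^ (lam - 1) := by
    rw [rpow_sub hS, rpow_one, div_eq_mul_inv]
  linear_combination (1 - t) ^ (lam - 1) * hode y + U y * U' y * hpow

lemma abs_selfSimilar_le {α : ℝ} (hα : lam = (1 + lam) * α) (hU : ∀ y, |U y| ≤ |y| ^ α)
    (ht : t < 1) : |selfSimilar lam U x t| ≤ |x| ^ α := by
  have hS : 0 < 1 - t := by linarith
  have hscale : 0 < (1 - t) ^ (-(1 + lam)) := rpow_pos_of_pos hS _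
  calc |selfSimilar lam U x t| ≤ (1 - t) ^ lam * |(1 - t) ^ (-(1 + lam)) * x| ^ α := by
        rw [selfSimilar, abs_mul, abs_of_pos (rpow_pos_of_pos hS lam)]
        gcongr
        exact hU _
    _ = |x| ^ α := by
        rw [abs_mul, abs_of_pos hscale, mul_rpow hscale.le (abs_nonneg x), ← rpow_mul hS.le,
          ← mul_assoc, ← rpow_add hS, neg_mul, ← hα, add_neg_cancel, rpow_zero, one_mul]

end SelfSimilar

lemma tendsto_neg_inv_one_sub_nhdsLT_one :
    Tendsto (fun t : ℝ => -(1 - t)⁻¹) (𝓝[<] 1) atBot := by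
  have h : Tendsto (fun t : ℝ => t - 1) (𝓝[<] 1) (𝓝[<] 0) := by
    refine tendsto_nhdsWithin_iff.mpr ⟨?_, ?_⟩
    · exact tendsto_nhdsWithin_of_tendsto_nhds ((continuous_sub_right 1).tendsto' 1 0 (sub_self 1))
    · filter_upwards [self_mem_nhdsWithin] with t ht
      exact sub_neg.mpr (Set.mem_Iio.mp ht)
  simpa [Function.comp_def, ← inv_neg] using tendsto_inv_nhdsLT_zero.comp h

/-- With `λ = 1/(2k)` and `U_k` the implicit Burgers profile, the self-similar
ansatz `u(x,t) = (1-t)^λ U_k((1-t)^{-(1+λ)} x)` solves the inviscid Burgers equation on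
`ℝ × (-∞,1)`, satisfies the uniform bound `|u(x,t)| ≤ |x|^(1/(2k+1))`, and its spatial
gradient at the origin is `∂ₓu(0,t) = -(1-t)⁻¹`, which tends to `-∞` as `t → 1⁻`. -/
theorem implicit_burgers_selfSimilar_blowup
    (k : ℕ) (hk : 1 ≤ k) (lam : ℝ) (hlam : lam = 1 / (2 * (k : ℝ)))
    (U : ℝ → ℝ) (hU : ∀ y : ℝ, U y + U y ^ (2 * k + 1) = -y)
    (u : ℝ → ℝ → ℝ)
    (hu : ∀ x t : ℝ, u x t = (1 - t) ^ lam * U ((1 - t) ^ (-(1 + lam)) * x)) :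
    (∀ x t : ℝ, t < 1 →
        deriv (fun s => u x s) t + u x t * deriv (fun z => u z t) x = 0) ∧
      (∀ x t : ℝ, t < 1 → |u x t| ≤ |x| ^ ((1 : ℝ) / (2 * (k : ℝ) + 1))) ∧
      (∀ t : ℝ, t < 1 → deriv (fun z => u z t) 0 = -(1 - t)⁻¹) ∧
      Filter.Tendsto (fun t : ℝ => deriv (fun z => u z t) 0)
        (nhdsWithin 1 (Set.Iio 1)) Filter.atBot := by
  obtain rfl : u = selfSimilar lam U := funext₂ hu
  have hk0 : k ≠ 0 := by omega
  have hderiv := hasDerivAt_of_add_pow_eq_neg hU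
  have hgrad (t : ℝ) (ht : t < 1) : deriv (fun z => selfSimilar lam U z t) 0 = -(1 - t)⁻¹ := by
    rw [(hasDerivAt_selfSimilar_space (x := 0) (lam := lam) (hderiv _) ht).deriv, mul_zero,
      map_zero_of_add_pow_eq_neg hU, zero_pow (by omega)]
    simp
  have hexponent : lam = (1 + lam) * (1 / (2 * k + 1)) := by
    have : (k : ℝ) ≠ 0 := by exact_mod_cast hk0
    rw [hlam]; field_simp
  refine ⟨fun x t ht => ?_, fun x t ht => ?_, hgrad, ?_⟩
  · exact selfSimilar_burgers hderiv (hlam ▸ selfSimilar_ode_of_add_pow_eq_neg hU hk0) ht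
  · exact abs_selfSimilar_le hexponent (abs_le_rpow_of_add_pow_eq_neg hU) ht
  · exact tendsto_neg_inv_one_sub_nhdsLT_one.congr' <|
      eventually_mem_nhdsWithin.mono fun t ht => (hgrad t ht).symm
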